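/- Let K be an A-field of A-characteristic zero and let Υ be a triangular t-module of dimension n over K whose diagonal Drinfeld modules ψ_1,…,ψ_n are pairwise non-isogenous, i.e. Hom_τ(ψ_i, ψ_j) = 0 for all i ≠ j. Then the endomorphism algebra End_τ(Υ) = { F ∈ Mat_n(K{τ}) : F·Υ_t = Υ_t·F } is commutative. -/

import Mathlib

open Polynomial Matrix Finset

noncomputable section

/-- Twisted ("skew") multiplication of polynomials in `τ`, determined by the rule
`τ · c = c^q · τ`:  `(Σᵢ aᵢτ^i) · (Σⱼ bⱼτ^j) = Σ_{i,j} aᵢ bⱼ^(q^i) τ^(i+j)`. -/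
def twMul {K : Type*} [Field K] (q : ℕ) (f g : Polynomial K) : Polynomial K :=
  f.sum fun i a => g.sum fun j b => Polynomial.C (a * b ^ q ^ i) * Polynomial.X ^ (i + j)

/-- Twisted multiplication of matrices over the twisted polynomial ring `K{τ}`. -/
def twMatMul {K : Type*} [Field K] (q : ℕ) {α β γ : Type*} [Fintype β]
    (A : Matrix α β (Polynomial K)) (B : Matrix β γ (Polynomial K)) :
    Matrix α γ (Polynomial K) :=
  Matrix.of fun i k => ∑ j, twMul q (A i j) (B j k)

/-- `ψ` is (the value at `t` of) a Drinfeld module of rank `r` over the `A`-field `(K, θ)`. -/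
def IsDrinfeld {K : Type*} [Field K] (θ : K) (r : ℕ) (ψ : Polynomial K) : Prop :=
  1 ≤ r ∧ ψ.coeff 0 = θ ∧ ψ.natDegree = r ∧ ψ.coeff r ≠ 0

/-- `Υ` is (the value at `t` of) a triangular t-module of dimension `n` with diagonal
Drinfeld modules `ψ 0 = ψ₁, …, ψ (n-1) = ψₙ` of ranks `r 0, …, r (n-1)`:  `Υ` is lower
triangular and its `(k,k)` diagonal entry is `ψ k.rev` (so `ψₙ` is top-left and
`ψ₁` is bottom-right). -/
def IsTriangular {K : Type*} [Field K] (θ : K) {n : ℕ}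
    (Υ : Matrix (Fin n) (Fin n) (Polynomial K))
    (ψ : Fin n → Polynomial K) (r : Fin n → ℕ) : Prop :=
  (∀ i j : Fin n, i < j → Υ i j = 0) ∧
  (∀ k : Fin n, Υ k k = ψ k.rev) ∧
  (∀ i : Fin n, IsDrinfeld θ (r i) (ψ i))

/-
If `F` commutes with `Υ`, comparing `(i, j)` entries of `F Υ = Υ F` gives
`F_ij ψ_j' = ψ_i' F_ij` up to terms involving entries `F_i'j'` with smaller `i' - j'`. Inducting on
`i - j`, non-isogeny kills all entries above the diagonal, so every endomorphism is lower
triangular. For two endomorphisms `F, G` the commutator `FG - GF` is again an endomorphism, lower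
triangular, and its diagonal entries have zero constant term. A twisted polynomial `u` with zero
constant term commuting with a Drinfeld module is zero: at the trailing degree `m` of `u` the
commutation reads `u_m θ^(q^m) = θ u_m`, impossible as `θ` is transcendental over `𝔽_q`. So the
same induction, now also covering the diagonal, shows `FG - GF = 0`.
-/

theorem Transcendental.pow_ne_self {R A : Type*} [CommRing R] [Nontrivial R] [CommRing A]
    [Algebra R A] {x : A} (hx : Transcendental R x) {k : ℕ} (hk : k ≠ 1) : x ^ k ≠ x := by
  intro h
  refine hx ⟨X ^ k - X, fun h0 => ?_, by simp [h]⟩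
  simpa [coeff_X, Ne.symm hk] using congrArg (coeff · k) h0

section TwistedPolynomial

variable {K : Type*} [Field K] {q : ℕ}

theorem add_pow_pow_of_add_pow (hfrob : ∀ a b : K, (a + b) ^ q = a ^ q + b ^ q) (i : ℕ)
    (a b : K) : (a + b) ^ q ^ i = a ^ q ^ i + b ^ q ^ i := by
  induction i with
  | zero => simp
  | succ i ih => rw [pow_succ, pow_mul, pow_mul, pow_mul, ih, hfrob]

theorem ne_zero_of_add_pow (hfrob : ∀ a b : K, (a + b) ^ q = a ^ q + b ^ q) : q ≠ 0 := by
  rintro rfl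
  simpa using hfrob 0 0

theorem twMul_monomial (hq : q ≠ 0) (i j : ℕ) (a b : K) :
    twMul q (monomial i a) (monomial j b) = monomial (i + j) (a * b ^ q ^ i) := by
  unfold twMul
  rw [sum_monomial_index, sum_monomial_index, C_mul_X_pow_eq_monomial]
  · simp [zero_pow (pow_ne_zero i hq)]
  · simp [Polynomial.sum]

theorem twMul_add_left (f f' g : K[X]) : twMul q (f + f') g = twMul q f g + twMul q f' g := by
  unfold twMul
  rw [sum_add_index]
  · simp [Polynomial.sum]
  · intro i a a'
    rw [← Polynomial.sum_add]
    simp only [← add_mul, ← C_add]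

theorem twMul_add_right (hfrob : ∀ a b : K, (a + b) ^ q = a ^ q + b ^ q) (f g g' : K[X]) :
    twMul q f (g + g') = twMul q f g + twMul q f g' := by
  unfold twMul
  rw [← Polynomial.sum_add]
  congr 1
  ext i a
  rw [sum_add_index]
  · simp [zero_pow (pow_ne_zero i (ne_zero_of_add_pow hfrob))]
  · intro j b b'
    rw [add_pow_pow_of_add_pow hfrob, mul_add, C_add, add_mul]

def twMulAddHom (hfrob : ∀ a b : K, (a + b) ^ q = a ^ q + b ^ q) : K[X] →+ K[X] →+ K[X] :=
  AddMonoidHom.mk' (fun f => AddMonoidHom.mk' (twMul q f) (twMul_add_right hfrob f)) fun f f' =>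
    AddMonoidHom.ext (twMul_add_left f f')

theorem twMulAddHom_apply (hfrob : ∀ a b : K, (a + b) ^ q = a ^ q + b ^ q) (f g : K[X]) :
    twMulAddHom hfrob f g = twMul q f g := rfl

theorem twMul_sub_left (f f' g : K[X]) : twMul q (f - f') g = twMul q f g - twMul q f' g :=
  map_sub (AddMonoidHom.mk' (twMul q · g) fun f f' => twMul_add_left f f' g) f f'

theorem twMul_sub_right (hfrob : ∀ a b : K, (a + b) ^ q = a ^ q + b ^ q) (f g g' : K[X]) :
    twMul q f (g - g') = twMul q f g - twMul q f g' :=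
  map_sub (twMulAddHom hfrob f) g g'

theorem twMul_zero_left (g : K[X]) : twMul q 0 g = 0 := sum_zero_index _

theorem twMul_zero_right (f : K[X]) : twMul q f 0 = 0 := by
  simp [twMul, Polynomial.sum]

theorem coeff_twMul (hfrob : ∀ a b : K, (a + b) ^ q = a ^ q + b ^ q) (f g : K[X]) (m : ℕ) :
    (twMul q f g).coeff m = ∑ x ∈ antidiagonal m, f.coeff x.1 * g.coeff x.2 ^ q ^ x.1 := by
  induction f using Polynomial.induction_on' with
  | add f f' hf hf' =>
    simp only [twMul_add_left, coeff_add, hf, hf', add_mul, sum_add_distrib]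
  | monomial k a =>
    induction g using Polynomial.induction_on' with
    | add g g' hg hg' =>
      simp only [twMul_add_right hfrob, coeff_add, hg, hg', add_pow_pow_of_add_pow hfrob,
        mul_add, sum_add_distrib]
    | monomial l b =>
      have hq := ne_zero_of_add_pow hfrob
      rw [twMul_monomial hq, coeff_monomial]
      split_ifs with hm
      · rw [sum_eq_single (k, l)]
        · simp
        · rintro ⟨i, j⟩ - hij
          simp only [coeff_monomial]
          split_ifs <;> simp_all [zero_pow (pow_ne_zero _ hq)]
        · simp [hm]
      · refine (sum_eq_zero fun ⟨i, j⟩ hij => ?_).symm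
        simp only [coeff_monomial]
        split_ifs <;> simp_all [zero_pow (pow_ne_zero _ hq)]

theorem coeff_twMul_of_coeff_eq_zero_left (hfrob : ∀ a b : K, (a + b) ^ q = a ^ q + b ^ q)
    {f : K[X]} {m : ℕ} (hf : ∀ i < m, f.coeff i = 0) (g : K[X]) :
    (twMul q f g).coeff m = f.coeff m * g.coeff 0 ^ q ^ m := by
  rw [coeff_twMul hfrob, sum_eq_single (m, 0)]
  · rintro ⟨i, j⟩ hij hne
    rw [HasAntidiagonal.mem_antidiagonal] at hij
    rw [hf i (by grind), zero_mul]
  · simp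

theorem coeff_twMul_of_coeff_eq_zero_right (hfrob : ∀ a b : K, (a + b) ^ q = a ^ q + b ^ q)
    (f : K[X]) {g : K[X]} {m : ℕ} (hg : ∀ j < m, g.coeff j = 0) :
    (twMul q f g).coeff m = f.coeff 0 * g.coeff m := by
  rw [coeff_twMul hfrob, sum_eq_single (0, m)]
  · simp
  · rintro ⟨i, j⟩ hij hne
    rw [HasAntidiagonal.mem_antidiagonal] at hij
    rw [hg j (by grind), zero_pow (pow_ne_zero _ (ne_zero_of_add_pow hfrob)), mul_zero]
  · simp

theorem coeff_zero_twMul (hfrob : ∀ a b : K, (a + b) ^ q = a ^ q + b ^ q) (f g : K[X]) :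
    (twMul q f g).coeff 0 = f.coeff 0 * g.coeff 0 :=
  coeff_twMul_of_coeff_eq_zero_right hfrob f fun _ h => absurd h (Nat.not_lt_zero _)

theorem twMul_assoc (hfrob : ∀ a b : K, (a + b) ^ q = a ^ q + b ^ q) (f g h : K[X]) :
    twMul q (twMul q f g) h = twMul q f (twMul q g h) := by
  have hq := ne_zero_of_add_pow hfrob
  induction f using Polynomial.induction_on' with
  | add f f' hf hf' => rw [twMul_add_left, twMul_add_left, twMul_add_left, hf, hf']
  | monomial i a =>
    induction g using Polynomial.induction_on' with
    | add g g' hg hg' => simp only [twMul_add_right hfrob, twMul_add_left, hg, hg']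
    | monomial j b =>
      induction h using Polynomial.induction_on' with
      | add h h' hh hh' => simp only [twMul_add_right hfrob, hh, hh']
      | monomial k c =>
        simp only [twMul_monomial hq, add_assoc, mul_pow, ← pow_mul, ← pow_add, add_comm j i,
          mul_assoc]

theorem twMatMul_assoc (hfrob : ∀ a b : K, (a + b) ^ q = a ^ q + b ^ q)
    {α β γ δ : Type*} [Fintype β] [Fintype γ] (A : Matrix α β K[X]) (B : Matrix β γ K[X])
    (C : Matrix γ δ K[X]) :
    twMatMul q (twMatMul q A B) C = twMatMul q A (twMatMul q B C) := by
  ext i l : 1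
  simp only [twMatMul, of_apply, ← twMulAddHom_apply hfrob, map_sum, AddMonoidHom.finsetSum_apply]
  simp only [twMulAddHom_apply, twMul_assoc hfrob]
  exact sum_comm

theorem twMatMul_sub_left {α β γ : Type*} [Fintype β] (A B : Matrix α β K[X])
    (C : Matrix β γ K[X]) : twMatMul q (A - B) C = twMatMul q A C - twMatMul q B C := by
  ext i k : 1
  simp only [twMatMul, of_apply, Matrix.sub_apply, twMul_sub_left, sum_sub_distrib]

theorem twMatMul_sub_right (hfrob : ∀ a b : K, (a + b) ^ q = a ^ q + b ^ q)
    {α β γ : Type*} [Fintype β] (A : Matrix α β K[X]) (B C : Matrix β γ K[X]) :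
    twMatMul q A (B - C) = twMatMul q A B - twMatMul q A C := by
  ext i k : 1
  simp only [twMatMul, of_apply, Matrix.sub_apply, twMul_sub_right hfrob, sum_sub_distrib]

theorem twMatMul_twMatMul_comm (hfrob : ∀ a b : K, (a + b) ^ q = a ^ q + b ^ q)
    {ι : Type*} [Fintype ι] {Υ F G : Matrix ι ι K[X]} (hF : twMatMul q F Υ = twMatMul q Υ F)
    (hG : twMatMul q G Υ = twMatMul q Υ G) :
    twMatMul q (twMatMul q F G) Υ = twMatMul q Υ (twMatMul q F G) := by
  rw [twMatMul_assoc hfrob, hG, ← twMatMul_assoc hfrob, hF, twMatMul_assoc hfrob]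

theorem twMatMul_commutator_comm (hfrob : ∀ a b : K, (a + b) ^ q = a ^ q + b ^ q)
    {ι : Type*} [Fintype ι] {Υ F G : Matrix ι ι K[X]} (hF : twMatMul q F Υ = twMatMul q Υ F)
    (hG : twMatMul q G Υ = twMatMul q Υ G) :
    twMatMul q (twMatMul q F G - twMatMul q G F) Υ =
      twMatMul q Υ (twMatMul q F G - twMatMul q G F) := by
  rw [twMatMul_sub_left, twMatMul_sub_right hfrob, twMatMul_twMatMul_comm hfrob hF hG,
    twMatMul_twMatMul_comm hfrob hG hF]

theorem eq_zero_of_twMul_comm (hfrob : ∀ a b : K, (a + b) ^ q = a ^ q + b ^ q) {ψ u : K[X]}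
    (hψ : ∀ m, 0 < m → ψ.coeff 0 ^ q ^ m ≠ ψ.coeff 0) (hcomm : twMul q u ψ = twMul q ψ u)
    (hu : u.coeff 0 = 0) : u = 0 := by
  by_contra hne
  set m := u.natTrailingDegree
  have hlt : ∀ i < m, u.coeff i = 0 := fun i hi => coeff_eq_zero_of_lt_natTrailingDegree hi
  have hum : u.coeff m ≠ 0 := trailingCoeff_nonzero_iff_nonzero.mpr hne
  have hm : 0 < m := Nat.pos_of_ne_zero fun h => hum (h ▸ hu)
  have hcoeff := congrArg (coeff · m) hcomm
  simp only [coeff_twMul_of_coeff_eq_zero_left hfrob hlt,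
    coeff_twMul_of_coeff_eq_zero_right hfrob _ hlt] at hcoeff
  exact hψ m hm (mul_left_cancel₀ hum (hcoeff.trans (mul_comm _ _)))

theorem coeff_zero_twMatMul_diag (hfrob : ∀ a b : K, (a + b) ^ q = a ^ q + b ^ q)
    {ι : Type*} [Fintype ι] [LinearOrder ι] {A B : Matrix ι ι K[X]} (hA : ∀ i j, i < j → A i j = 0) (hB : ∀ i j, i < j → B i j = 0)
    (k : ι) : (twMatMul q A B k k).coeff 0 = (A k k).coeff 0 * (B k k).coeff 0 := by
  rw [twMatMul, of_apply, finsetSum_coeff, sum_eq_single k, coeff_zero_twMul hfrob]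
  · intro j _ hjk
    rcases lt_or_gt_of_ne hjk with h | h
    · rw [hB j k h, twMul_zero_right, coeff_zero]
    · rw [hA k j h, twMul_zero_left, coeff_zero]
  · simp

end TwistedPolynomial

section Triangular

variable {K : Type*} [Field K] {q n : ℕ} {Υ F : Matrix (Fin n) (Fin n) K[X]}

theorem twMul_diag_comm_of_twMatMul_comm (hlow : ∀ i j : Fin n, i < j → Υ i j = 0)
    (hF : twMatMul q F Υ = twMatMul q Υ F) {i j : Fin n}
    (hbelow : ∀ i' j' : Fin n, (i' : ℤ) - j' < (i : ℤ) - j → F i' j' = 0) :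
    twMul q (F i j) (Υ j j) = twMul q (Υ i i) (F i j) := by
  have h := congrFun (congrFun hF i) j
  rwa [twMatMul, twMatMul, of_apply, of_apply, sum_eq_single j, sum_eq_single i] at h
  · intro k _ hki
    rcases lt_or_gt_of_ne hki with hk | hk
    · rw [hbelow k j (by omega), twMul_zero_right]
    · rw [hlow i k hk, twMul_zero_left]
  · simp
  · intro k _ hkj
    rcases lt_or_gt_of_ne hkj with hk | hk
    · rw [hlow k j hk, twMul_zero_right]
    · rw [hbelow i k (by omega), twMul_zero_left]
  · simp

theorem apply_eq_zero_of_twMatMul_comm (hlow : ∀ i j : Fin n, i < j → Υ i j = 0)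
    (hF : twMatMul q F Υ = twMatMul q Υ F) {d : ℤ}
    (hcancel : ∀ i j : Fin n, (i : ℤ) - j ≤ d →
      twMul q (F i j) (Υ j j) = twMul q (Υ i i) (F i j) → F i j = 0)
    (i j : Fin n) (hij : (i : ℤ) - j ≤ d) : F i j = 0 :=
  hcancel i j hij <| twMul_diag_comm_of_twMatMul_comm hlow hF fun i' j' h =>
    apply_eq_zero_of_twMatMul_comm hlow hF hcancel i' j' (by omega)
termination_by (i : ℕ) + n - j
decreasing_by omega

theorem apply_eq_zero_of_lt_of_twMatMul_comm (hlow : ∀ i j : Fin n, i < j → Υ i j = 0)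
    (hnoniso : ∀ i j : Fin n, i ≠ j → ∀ u, twMul q u (Υ j j) = twMul q (Υ i i) u → u = 0)
    (hF : twMatMul q F Υ = twMatMul q Υ F) (i j : Fin n) (hij : i < j) : F i j = 0 :=
  apply_eq_zero_of_twMatMul_comm hlow hF (d := -1)
    (fun i j h => hnoniso i j (Fin.ne_of_lt (by omega)) _) i j (by omega)

theorem eq_zero_of_twMatMul_comm (hfrob : ∀ a b : K, (a + b) ^ q = a ^ q + b ^ q)
    (hlow : ∀ i j : Fin n, i < j → Υ i j = 0)
    (hnoniso : ∀ i j : Fin n, i ≠ j → ∀ u, twMul q u (Υ j j) = twMul q (Υ i i) u → u = 0)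
    (hθ : ∀ k : Fin n, ∀ m, 0 < m → (Υ k k).coeff 0 ^ q ^ m ≠ (Υ k k).coeff 0)
    (hF : twMatMul q F Υ = twMatMul q Υ F) (hF0 : ∀ k, (F k k).coeff 0 = 0) : F = 0 := by
  refine ext fun i j => apply_eq_zero_of_twMatMul_comm hlow hF (d := n) (fun i j _ hc => ?_) i j
    (by omega)
  by_cases hij : i = j
  · subst hij
    exact eq_zero_of_twMul_comm hfrob (hθ i) hc (hF0 i)
  · exact hnoniso i j hij _ hc

end Triangular

/-- commutativity of the endomorphism algebra.
If `K` has `A`-characteristic zero and the diagonal Drinfeld modules of the triangular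
t-module `Υ` are pairwise non-isogenous (`Hom_τ(ψ_i,ψ_j) = 0` for `i ≠ j`), then the
endomorphism algebra `End_τ(Υ)` is commutative. -/
theorem endomorphism_algebra_commutative
    {K : Type*} [Field K] (p s q : ℕ) [Fact p.Prime] (hs : 0 < s) (hq : q = p ^ s)
    [Algebra (GaloisField p s) K] (θ : K)
    (hθ : Transcendental (GaloisField p s) θ) {n : ℕ}
    (Υ : Matrix (Fin n) (Fin n) (Polynomial K))
    (ψ : Fin n → Polynomial K) (r : Fin n → ℕ)
    (hΥ : IsTriangular θ Υ ψ r)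
    (hnoniso : ∀ i j : Fin n, i ≠ j →
      ∀ u : Polynomial K, twMul q u (ψ i) = twMul q (ψ j) u → u = 0) :
    ∀ F G : Matrix (Fin n) (Fin n) (Polynomial K),
      twMatMul q F Υ = twMatMul q Υ F →
      twMatMul q G Υ = twMatMul q Υ G →
      twMatMul q F G = twMatMul q G F := by
  intro F G hF hG
  obtain ⟨hlow, hdiag, hdrinfeld⟩ := hΥ
  have : CharP K p := charP_of_injective_algebraMap (algebraMap (GaloisField p s) K).injective p
  have hfrob : ∀ a b : K, (a + b) ^ q = a ^ q + b ^ q := fun a b => hq ▸ add_pow_char_pow a b p s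
  have hq1 : 1 < q := hq ▸ Nat.one_lt_pow hs.ne' (Fact.out : p.Prime).one_lt
  have hΥnoniso : ∀ i j : Fin n, i ≠ j →
      ∀ u, twMul q u (Υ j j) = twMul q (Υ i i) u → u = 0 := by
    intro i j hij
    rw [hdiag, hdiag]
    exact hnoniso j.rev i.rev (Fin.rev_injective.ne hij.symm)
  have hΥθ : ∀ k : Fin n, ∀ m, 0 < m → (Υ k k).coeff 0 ^ q ^ m ≠ (Υ k k).coeff 0 := by
    intro k m hm
    rw [hdiag, (hdrinfeld _).2.1]
    exact hθ.pow_ne_self (Nat.one_lt_pow hm.ne' hq1).ne'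
  have hFlow := apply_eq_zero_of_lt_of_twMatMul_comm hlow hΥnoniso hF
  have hGlow := apply_eq_zero_of_lt_of_twMatMul_comm hlow hΥnoniso hG
  rw [← sub_eq_zero]
  refine eq_zero_of_twMatMul_comm hfrob hlow hΥnoniso hΥθ
    (twMatMul_commutator_comm hfrob hF hG) fun k => ?_
  rw [Matrix.sub_apply, coeff_sub, coeff_zero_twMatMul_diag hfrob hFlow hGlow,
    coeff_zero_twMatMul_diag hfrob hGlow hFlow, mul_comm, sub_self]
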